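/- Let M be an n×n real matrix with all entries nonnegative and all diagonal entries strictly positive. Define b ∈ ℝ^n by b_i = Σ_j M_{ji} (the column sums of M) and b̄ ∈ ℝ^n by b̄_i = Σ_j M_{ji}·b_j. If the product b_i·b̄_i takes the same value for all i ∈ {1,…,n}, then b_i takes the same value for all i ∈ {1,…,n}. -/
import Mathlib


/-- if `M` has nonnegative entries and strictly positive diagonal, `b` is the
vector of column sums of `M`, and `b̄_i = Σ_j M_{ji}·b_j`, then constancy of `b_i·b̄_i`
across `i` forces `b` itself to be constant. -/
theorem statement_5 {n : ℕ} (M : Matrix (Fin n) (Fin n) ℝ)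
    (hM_nonneg : ∀ i j, 0 ≤ M i j) (hM_diag : ∀ i, 0 < M i i)
    (b bb : Fin n → ℝ)
    (hb : ∀ i, b i = ∑ j, M j i)
    (hbb : ∀ i, bb i = ∑ j, M j i * b j)
    (hconst : ∀ i j, b i * bb i = b j * bb j) :
    ∀ i j, b i = b j := by
  have hbpos : ∀ i, 0 < b i := by
    intro i
    rw [hb]
    exact Finset.sum_pos' (fun j _ => hM_nonneg j i) ⟨i, Finset.mem_univ i, hM_diag i⟩
  intro i j
  obtain ⟨I, -, hI⟩ := Finset.exists_max_image Finset.univ b ⟨i, Finset.mem_univ i⟩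
  obtain ⟨J, -, hJ⟩ := Finset.exists_min_image Finset.univ b ⟨i, Finset.mem_univ i⟩
  have hI' : ∀ k, b k ≤ b I := fun k => hI k (Finset.mem_univ k)
  have hJ' : ∀ k, b J ≤ b k := fun k => hJ k (Finset.mem_univ k)
  have h1 : b J * b I ≤ bb I := by
    have : b J * b I = ∑ k, M k I * b J := by
      rw [hb I, Finset.mul_sum]
      exact Finset.sum_congr rfl fun k _ => mul_comm _ _
    rw [this, hbb]
    exact Finset.sum_le_sum fun k _ =>
      mul_le_mul_of_nonneg_left (hJ' k) (hM_nonneg k I)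
  have h2 : bb J ≤ b I * b J := by
    have : b I * b J = ∑ k, M k J * b I := by
      rw [hb J, Finset.mul_sum]
      exact Finset.sum_congr rfl fun k _ => mul_comm _ _
    rw [this, hbb]
    exact Finset.sum_le_sum fun k _ =>
      mul_le_mul_of_nonneg_left (hI' k) (hM_nonneg k J)
  have key : b I ≤ b J := by
    have hc := hconst I J
    have pI := hbpos I
    have pJ := hbpos J
    nlinarith [mul_le_mul_of_nonneg_left h1 pI.le, mul_le_mul_of_nonneg_left h2 pJ.le, mul_pos pI pJ]
  linarith [hI' i, hI' j, hJ' i, hJ' j]
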